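/- The period function T(z) = 2∫_{x^min(z)}^{x^max(z)} dx/√(x²(1-x)² - 4zx) converges to 2π√3 as z → (1/27)^-. -/

import Mathlib

open Set Real Filter

/-- θ(w) ∈ (0,π) with cos θ(w) = 2w - 1. -/
noncomputable def theta (w : ℝ) : ℝ := Real.arccos (2 * w - 1)

/-- Smallest root of x(1-x)² = 4z in (0,1). -/
noncomputable def xminf (z : ℝ) : ℝ := (2 / 3) * (1 - Real.sin (theta (27 * z) / 3 + π / 6))

/-- Largest root of x(1-x)² = 4z in (0,1). -/
noncomputable def xmaxf (z : ℝ) : ℝ := (2 / 3) * (1 + Real.sin (theta (27 * z) / 3 - π / 6))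

/-- The period function T(z) = 2∫_{xmin(z)}^{xmax(z)} dx/√(x²(1-x)² - 4zx). -/
noncomputable def Tfun (z : ℝ) : ℝ :=
  2 * ∫ x in xminf z..xmaxf z, 1 / Real.sqrt (x ^ 2 * (1 - x) ^ 2 - 4 * z * x)

/-!
Writing `x²(1-x)² - 4zx = (x - x_min)(x_max - x) · x(x_add - x)`, the integrand of `T(z)` is
`1/√((x - x_min)(x_max - x))` times `1/√(x(x_add - x))`, and on `[x_min, x_max]` the product
`x(x_add - x)` lies between `x_min(x_add - x_max)` and `x_max(x_add - x_min)`. Since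
`∫_a^b dx/√((x-a)(b-x)) = π` for all `a < b`, `T(z)` is squeezed between
`2π/√(x_max(x_add - x_min))` and `2π/√(x_min(x_add - x_max))`, and both tend to `2π√3` because
`x_min, x_max → 1/3` and `x_add → 4/3`.
-/
open intervalIntegral MeasureTheory

section ArcsineIntegral

variable {a b : ℝ}

theorem hasDerivAt_arcsin_two_mul_sub_div {x : ℝ} (hx : x ∈ Ioo a b) :
    HasDerivAt (fun x => arcsin ((2 * x - a - b) / (b - a))) (1 / √((x - a) * (b - x))) x := by
  obtain ⟨hax, hxb⟩ := hx
  have hba : 0 < b - a := by linarith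
  have hlo : (2 * x - a - b) / (b - a) ≠ -1 := by
    rw [Ne, div_eq_iff hba.ne']; linarith
  have hhi : (2 * x - a - b) / (b - a) ≠ 1 := by
    rw [Ne, div_eq_iff hba.ne']; linarith
  have hinner : HasDerivAt (fun x => (2 * x - a - b) / (b - a)) (2 / (b - a)) x := by
    simpa using ((((hasDerivAt_id x).const_mul 2).sub_const a).sub_const b).div_const (b - a)
  refine ((hasDerivAt_arcsin hlo hhi).comp x hinner).congr_deriv ?_
  have hsq : 1 - ((2 * x - a - b) / (b - a)) ^ 2 = (2 / (b - a)) ^ 2 * ((x - a) * (b - x)) := by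
    field_simp; ring
  rw [hsq, sqrt_mul (by positivity), sqrt_sq (by positivity)]
  field_simp

theorem intervalIntegrable_one_div_sqrt_mul_sub (hab : a < b) :
    IntervalIntegrable (fun x => 1 / √((x - a) * (b - x))) volume a b := by
  refine intervalIntegrable_deriv_of_nonneg (g := fun x => arcsin ((2 * x - a - b) / (b - a)))
    (by fun_prop) (fun x hx => hasDerivAt_arcsin_two_mul_sub_div ?_) (fun x _ => by positivity)
  rwa [min_eq_left hab.le, max_eq_right hab.le] at hx

theorem integral_one_div_sqrt_mul_sub (hab : a < b) :
    ∫ x in a..b, 1 / √((x - a) * (b - x)) = π := by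
  rw [integral_eq_sub_of_hasDerivAt_of_le hab.le (by fun_prop)
    (fun x hx => hasDerivAt_arcsin_two_mul_sub_div hx)
    (intervalIntegrable_one_div_sqrt_mul_sub hab)]
  have hba : b - a ≠ 0 := by linarith
  rw [show (2 * b - a - b) / (b - a) = 1 by field_simp; ring,
    show (2 * a - a - b) / (b - a) = -1 by field_simp; ring, arcsin_one, arcsin_neg_one]
  ring

theorem integral_one_div_sqrt_bounds_of_eq_mul {f g : ℝ → ℝ} {m M : ℝ} (hab : a < b) (hm : 0 < m)
    (hf : Measurable f) (hfg : ∀ x ∈ Icc a b, f x = (x - a) * (b - x) * g x)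
    (hg : ∀ x ∈ Icc a b, m ≤ g x ∧ g x ≤ M) :
    π / √M ≤ ∫ x in a..b, 1 / √(f x) ∧ ∫ x in a..b, 1 / √(f x) ≤ π / √m := by
  set K : ℝ → ℝ := fun x => 1 / √((x - a) * (b - x))
  have hK := intervalIntegrable_one_div_sqrt_mul_sub hab
  have hpt : ∀ x ∈ Icc a b, K x * (√M)⁻¹ ≤ 1 / √(f x) ∧ 1 / √(f x) ≤ K x * (√m)⁻¹ := by
    intro x hx
    obtain ⟨hmg, hgM⟩ := hg x hx
    have hsplit : 1 / √(f x) = K x * (√(g x))⁻¹ := by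
      rw [hfg x hx, sqrt_mul (mul_nonneg (by linarith [hx.1]) (by linarith [hx.2])), one_div,
        mul_inv]
      simp only [K, one_div]
    have hK0 : 0 ≤ K x := by positivity
    rw [hsplit]
    exact ⟨mul_le_mul_of_nonneg_left
        (inv_anti₀ (sqrt_pos.2 (hm.trans_le hmg)) (sqrt_le_sqrt hgM)) hK0,
      mul_le_mul_of_nonneg_left (inv_anti₀ (sqrt_pos.2 hm) (sqrt_le_sqrt hmg)) hK0⟩
  have hint : IntervalIntegrable (fun x => 1 / √(f x)) volume a b := by
    refine (hK.mul_const (√m)⁻¹).mono_fun' (measurable_const.div hf.sqrt).aestronglyMeasurable ?_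
    rw [EventuallyLE, uIoc_of_le hab.le, ae_restrict_iff' measurableSet_Ioc]
    refine .of_forall fun x hx => ?_
    rw [norm_of_nonneg (by positivity)]
    exact (hpt x (Ioc_subset_Icc_self hx)).2
  have hlow := integral_mono_on hab.le (hK.mul_const _) hint fun x hx => (hpt x hx).1
  have hup := integral_mono_on hab.le hint (hK.mul_const _) fun x hx => (hpt x hx).2
  rw [intervalIntegral.integral_mul_const, integral_one_div_sqrt_mul_sub hab,
    ← div_eq_mul_inv] at hlow hup
  exact ⟨hlow, hup⟩

end ArcsineIntegral

/-- The third root of `x(1-x)² = 4z`, which lies in `(1, 4/3)`. -/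
noncomputable def xaddf (z : ℝ) : ℝ := (2 / 3) * (1 + cos (theta (27 * z) / 3))

theorem xminf_eq_cos (z : ℝ) : xminf z = 2 / 3 * (1 - cos (π / 3 - theta (27 * z) / 3)) := by
  rw [xminf, ← cos_pi_div_two_sub]
  ring_nf

theorem xmaxf_eq_cos (z : ℝ) : xmaxf z = 2 / 3 * (1 - cos (π / 3 + theta (27 * z) / 3)) := by
  rw [xmaxf, ← cos_pi_div_two_sub, ← neg_neg (cos _), ← cos_pi_sub]
  ring_nf

theorem xaddf_eq_cos (z : ℝ) : xaddf z = 2 / 3 * (1 - cos (π - theta (27 * z) / 3)) := by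
  rw [xaddf, cos_pi_sub, sub_neg_eq_add]

theorem cos_theta {w : ℝ} (hw : w ∈ Icc 0 1) : cos (theta w) = 2 * w - 1 :=
  cos_arccos (by linarith [hw.1]) (by linarith [hw.2])

theorem theta_mem_Ioo {w : ℝ} (hw : w ∈ Ioo 0 1) : theta w ∈ Ioo 0 π :=
  ⟨arccos_pos.2 (by linarith [hw.2]), (arccos_lt_pi).2 (by linarith [hw.1])⟩

theorem sub_xminf_mul_xmaxf_sub_mul_xaddf_sub {z : ℝ} (hz : z ∈ Icc 0 (1 / 27)) (x : ℝ) :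
    (x - xminf z) * (xmaxf z - x) * (xaddf z - x) = x * (1 - x) ^ 2 - 4 * z := by
  have htriple : 4 * cos (theta (27 * z) / 3) ^ 3 - 3 * cos (theta (27 * z) / 3) = 54 * z - 1 := by
    rw [← cos_three_mul, mul_div_cancel₀ _ three_ne_zero,
      cos_theta ⟨by linarith [hz.1], by linarith [hz.2]⟩]
    ring
  rw [xminf, xmaxf, xaddf, sin_add, sin_sub, sin_pi_div_six, cos_pi_div_six]
  set C := cos (theta (27 * z) / 3)
  set S := sin (theta (27 * z) / 3)
  have hsq3 : √3 ^ 2 = 3 := sq_sqrt (by norm_num)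
  -- Vieta: the roots sum to 2, their pairwise products sum to 1, their product is `4z`.
  linear_combination (x * (-(S ^ 2) / 9) + (S ^ 2) * (2 + 2 * C) / 27) * hsq3
    + (x * (-1 / 3) + (2 + 2 * C) / 9) * sin_sq_add_cos_sq (theta (27 * z) / 3)
    - (2 / 27) * htriple

theorem xminf_pos_lt_xmaxf_lt_xaddf {z : ℝ} (hz : z ∈ Ioo 0 (1 / 27)) :
    0 < xminf z ∧ xminf z < xmaxf z ∧ xmaxf z < xaddf z := by
  have hs : 0 < theta (27 * z) / 3 ∧ theta (27 * z) / 3 < π / 3 := by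
    obtain ⟨h0, hπ⟩ := theta_mem_Ioo (w := 27 * z) ⟨by linarith [hz.1], by linarith [hz.2]⟩
    constructor <;> linarith
  rw [xminf_eq_cos, xmaxf_eq_cos, xaddf_eq_cos]
  set s := theta (27 * z) / 3
  obtain ⟨hs0, hsπ⟩ := hs
  have hcos {u v : ℝ} (hu : 0 ≤ u) (huv : u < v) (hv : v ≤ π) : cos v < cos u :=
    strictAntiOn_cos ⟨hu, by linarith⟩ ⟨by linarith, hv⟩ huv
  have h1 := hcos le_rfl (by linarith : 0 < π / 3 - s) (by linarith)
  have h2 := hcos (by linarith) (by linarith : π / 3 - s < π / 3 + s) (by linarith)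
  have h3 := hcos (by linarith) (by linarith : π / 3 + s < π - s) (by linarith)
  rw [cos_zero] at h1
  refine ⟨?_, ?_, ?_⟩ <;> linarith

theorem Tfun_bounds {z : ℝ} (hz : z ∈ Ioo 0 (1 / 27)) :
    2 * π / √(xmaxf z * (xaddf z - xminf z)) ≤ Tfun z ∧
      Tfun z ≤ 2 * π / √(xminf z * (xaddf z - xmaxf z)) := by
  obtain ⟨ha, hab, hbc⟩ := xminf_pos_lt_xmaxf_lt_xaddf hz
  have hbounds := integral_one_div_sqrt_bounds_of_eq_mul
    (f := fun x => x ^ 2 * (1 - x) ^ 2 - 4 * z * x) (g := fun x => x * (xaddf z - x))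
    (M := xmaxf z * (xaddf z - xminf z)) hab
    (mul_pos ha (sub_pos.2 hbc)) (by fun_prop)
    (fun x _ => by
      linear_combination -x * sub_xminf_mul_xmaxf_sub_mul_xaddf_sub (Ioo_subset_Icc_self hz) x)
    (fun x hx => ⟨by nlinarith [hx.1, hx.2], by nlinarith [hx.1, hx.2]⟩)
  rw [Tfun, mul_div_assoc, mul_div_assoc]
  constructor <;> linarith [hbounds.1, hbounds.2]

theorem theta_one : theta 1 = 0 := by
  rw [theta]; norm_num

theorem continuous_xminf : Continuous xminf := by
  unfold xminf theta; fun_prop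

theorem continuous_xmaxf : Continuous xmaxf := by
  unfold xmaxf theta; fun_prop

theorem continuous_xaddf : Continuous xaddf := by
  unfold xaddf theta; fun_prop

theorem tendsto_two_pi_div_sqrt {α : Type*} {l : Filter α} {p : α → ℝ}
    (hp : Tendsto p l (nhds (1 / 3))) :
    Tendsto (fun z => 2 * π / √(p z)) l (nhds (2 * π * √3)) := by
  have hlim := tendsto_const_nhds (x := 2 * π) |>.div (continuous_sqrt.tendsto _ |>.comp hp)
    (by positivity)
  rwa [sqrt_div' _ (by norm_num), sqrt_one, div_div_eq_mul_div, div_one] at hlim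

/-- T(z) → 2π√3 as z → (1/27)⁻. -/
theorem stmt_10 :
    Tendsto Tfun (nhdsWithin (1 / 27) (Iio (1 / 27))) (nhds (2 * π * Real.sqrt 3)) := by
  have hroots : xminf (1 / 27) = 1 / 3 ∧ xmaxf (1 / 27) = 1 / 3 ∧ xaddf (1 / 27) = 4 / 3 := by
    norm_num [xminf, xmaxf, xaddf, theta_one]
  have hlim {p : ℝ → ℝ} (hp : Continuous p) (hval : p (1 / 27) = 1 / 3) :
      Tendsto (fun z => 2 * π / √(p z)) (nhdsWithin (1 / 27) (Iio (1 / 27))) (nhds (2 * π * √3)) :=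
    tendsto_two_pi_div_sqrt (hval ▸ hp.tendsto _ |>.mono_left nhdsWithin_le_nhds)
  refine tendsto_of_tendsto_of_tendsto_of_le_of_le'
    (hlim (continuous_xmaxf.mul (continuous_xaddf.sub continuous_xminf)) ?_)
    (hlim (continuous_xminf.mul (continuous_xaddf.sub continuous_xmaxf)) ?_) ?_ ?_
  · norm_num [hroots]
  · norm_num [hroots]
  all_goals
    filter_upwards [Ioo_mem_nhdsLT (by norm_num : (0 : ℝ) < 1 / 27)] with z hz
  exacts [(Tfun_bounds hz).1, (Tfun_bounds hz).2]
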